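/- Let rt : IP → (IP → Option (ℕ × Bool × ℕ × IP × Set IP)) be a family of routing tables satisfying the net-sequence-number invariant. Let a, sip, oip ∈ IP, osn, hops ∈ ℕ and pre ⊆ IP with sip ≠ oip, osn ≥ 1, oip ∈ kD(rt sip) and osn ≤ nsqn(rt sip, oip). Define rt' by rt' a = upd(rt a, (oip, osn, true, hops + 1, sip, pre)) and rt' ip = rt ip for ip ≠ a. Then rt' satisfies the net-sequence-number invariant. (The RREQ-handling case, Line 6 of the RREQ process, of the proof of Proposition 3: if the content of the sender sip's routing table is at least as fresh as the information in the received request, installing the reverse-route entry preserves the invariant.) -/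
import Mathlib


variable {IP : Type*}

/-- A routing table: for each destination, optionally an entry
    `(dsn, flag, hops, nhip, pre)`. -/
abbrev RT (IP : Type*) := IP → Option (ℕ × Bool × ℕ × IP × Set IP)

/-- Destination sequence number of the entry at `dip` (0 if no entry). -/
def sqn (rt : RT IP) (dip : IP) : ℕ :=
  match rt dip with
  | none => 0
  | some e => e.1

/-- Known destinations. -/
def kD (rt : RT IP) : Set IP := {dip | rt dip ≠ none}

/-- Valid destinations. -/
def vD (rt : RT IP) : Set IP :=
  {dip | ∃ dsn hops nhip pre, rt dip = some (dsn, true, hops, nhip, pre)}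

/-- Next hop of the entry at `dip` (junk value `dip` if no entry). -/
def nhop (rt : RT IP) (dip : IP) : IP :=
  match rt dip with
  | none => dip
  | some e => e.2.2.2.1

/-- Hop count of the entry at `dip` (0 if no entry). -/
def dhops (rt : RT IP) (dip : IP) : ℕ :=
  match rt dip with
  | none => 0
  | some e => e.2.2.1

/-- Net sequence number: `sqn` if the entry is valid or `sqn = 0`,
    otherwise `sqn - 1` (truncated subtraction). -/
def nsqn (rt : RT IP) (dip : IP) : ℕ :=
  match rt dip with
  | none => 0
  | some e => if e.2.1 = true ∨ e.1 = 0 then e.1 else e.1 - 1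

/-- The AODV routing-table update function. -/
def upd [DecidableEq IP] (rt : RT IP) (r : IP × ℕ × Bool × ℕ × IP × Set IP) : RT IP :=
  fun ip =>
    if ip = r.1 then
      match rt r.1, r.2 with
      | none, e => some e
      | some (dsn₀, f₀, hops₀, nhip₀, pre₀), (dsn, f, hops, nhip, pre) =>
        if dsn₀ < dsn then some (dsn, f, hops, nhip, pre ∪ pre₀)
        else if dsn₀ = dsn ∧ hops < hops₀ then some (dsn, f, hops, nhip, pre ∪ pre₀)
        else if dsn₀ = dsn ∧ f₀ = false then some (dsn, f, hops, nhip, pre ∪ pre₀)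
        else if dsn = 0 then some (dsn₀, f, hops, nhip, pre ∪ pre₀)
        else some (dsn₀, f₀, hops₀, nhip₀, pre₀ ∪ pre)
    else rt ip

/-- The AODV route-invalidation function. -/
def inv (rt : RT IP) (dests : IP → Option ℕ) : RT IP :=
  fun rip =>
    match dests rip, rt rip with
    | some rsn, some (_, _, hops₀, nhip₀, pre₀) => some (rsn, false, hops₀, nhip₀, pre₀)
    | _, _ => rt rip

/-- The AODV precursor-addition function. -/
def addpre [DecidableEq IP] (rt : RT IP) (dip : IP) (npre : Set IP) : RT IP :=
  fun ip =>
    if ip = dip then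
      match rt dip with
      | none => none
      | some (dsn₀, f₀, hops₀, nhip₀, pre₀) => some (dsn₀, f₀, hops₀, nhip₀, pre₀ ∪ npre)
    else rt ip

/-- The net-sequence-number invariant for a family of routing tables. -/
def NsqnInv (rt : IP → RT IP) : Prop :=
  ∀ ip dip, dip ∈ kD (rt ip) → nhop (rt ip) dip ≠ dip →
    dip ∈ kD (rt (nhop (rt ip) dip)) ∧
      nsqn (rt ip) dip ≤ nsqn (rt (nhop (rt ip) dip)) dip

lemma nsqn_congr {rt₁ rt₂ : RT IP} {dip : IP} (h : rt₁ dip = rt₂ dip) :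
    nsqn rt₁ dip = nsqn rt₂ dip := by unfold nsqn; rw [h]

lemma nhop_congr {rt₁ rt₂ : RT IP} {dip : IP} (h : rt₁ dip = rt₂ dip) :
    nhop rt₁ dip = nhop rt₂ dip := by unfold nhop; rw [h]

lemma kD_mem {rt : RT IP} {dip : IP} : dip ∈ kD rt ↔ rt dip ≠ none := Iff.rfl

lemma upd_ne [DecidableEq IP] (rt : RT IP) (r : IP × ℕ × Bool × ℕ × IP × Set IP)
    {ip : IP} (h : ip ≠ r.1) : upd rt r ip = rt ip := by
  simp [upd, h]

/-- Dichotomy for the update at the destination `oip` itself (when `1 ≤ osn`):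
either the new entry is installed (and the old sequence number was at most `osn`),
or the old entry is kept up to precursors. -/
lemma upd_oip [DecidableEq IP] (rt : RT IP) (oip sip : IP) (osn hops : ℕ)
    (pre : Set IP) (hosn : 1 ≤ osn) :
    (sqn rt oip ≤ osn ∧
      ∃ X, upd rt (oip, osn, true, hops + 1, sip, pre) oip
        = some (osn, true, hops + 1, sip, X)) ∨
    (∃ dsn₀ f₀ hops₀ nhip₀ pre₀ X, rt oip = some (dsn₀, f₀, hops₀, nhip₀, pre₀) ∧
      upd rt (oip, osn, true, hops + 1, sip, pre) oip
        = some (dsn₀, f₀, hops₀, nhip₀, X)) := by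
  rcases he : rt oip with _ | ⟨dsn₀, f₀, hops₀, nhip₀, pre₀⟩
  · left
    refine ⟨by simp [sqn, he], pre, ?_⟩
    simp [upd, he]
  · have hs : sqn rt oip = dsn₀ := by simp [sqn, he]
    rw [hs]
    unfold upd
    simp only [he, if_pos rfl]
    split_ifs
    all_goals try exact absurd trivial ‹¬True›
    all_goals try exact Or.inr ⟨dsn₀, f₀, hops₀, nhip₀, pre₀, _, rfl, rfl⟩
    all_goals try exact Or.inl ⟨by omega, _, rfl⟩
    all_goals exact absurd ‹osn = 0› (by omega)

lemma nsqn_le_sqn (rt : RT IP) (dip : IP) : nsqn rt dip ≤ sqn rt dip := by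
  cases h : rt dip <;> simp [nsqn, sqn, h]
  split_ifs <;> omega

lemma upd_kD [DecidableEq IP] (rt : RT IP) (oip sip : IP) (osn hops : ℕ)
    (pre : Set IP) (hosn : 1 ≤ osn) {dip : IP} (h : rt dip ≠ none) :
    upd rt (oip, osn, true, hops + 1, sip, pre) dip ≠ none := by
  by_cases hd : dip = oip
  · subst hd
    rcases upd_oip rt dip sip osn hops pre hosn with ⟨_, X, hX⟩ |
      ⟨d₀, f₀, h₀, n₀, p₀, X, _, hX⟩ <;> simp [hX]
  · rw [upd_ne rt _ hd]; exact h

lemma nsqn_upd_le [DecidableEq IP] (rt : RT IP) (oip sip : IP) (osn hops : ℕ)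
    (pre : Set IP) (hosn : 1 ≤ osn) (dip : IP) :
    nsqn rt dip ≤ nsqn (upd rt (oip, osn, true, hops + 1, sip, pre)) dip := by
  by_cases hd : dip = oip
  · subst hd
    rcases upd_oip rt dip sip osn hops pre hosn with ⟨hsq, X, hX⟩ |
      ⟨d₀, f₀, h₀, n₀, p₀, X, he, hX⟩
    · have h1 : nsqn (upd rt (dip, osn, true, hops + 1, sip, pre)) dip = osn := by
        unfold nsqn; rw [hX]; simp
      rw [h1]
      exact le_trans (nsqn_le_sqn rt dip) hsq
    · have h1 : nsqn (upd rt (dip, osn, true, hops + 1, sip, pre)) dip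
          = nsqn rt dip := by
        unfold nsqn; rw [hX, he]
      rw [h1]
  · rw [nsqn_congr (upd_ne rt _ hd)]

/-- RREQ-handling case of Proposition 3: installing the
    reverse-route entry `(oip, osn, valid, hops+1, sip, pre)` at one node
    preserves the net-sequence-number invariant, provided the sender `sip`'s
    routing table information is at least as fresh. -/
theorem nsqnInv_upd_rreq [DecidableEq IP] (rt : IP → RT IP) (hinv : NsqnInv rt)
    (a sip oip : IP) (osn hops : ℕ) (pre : Set IP)
    (hne : sip ≠ oip) (hosn : 1 ≤ osn)
    (hkD : oip ∈ kD (rt sip)) (hfresh : osn ≤ nsqn (rt sip) oip) :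
    NsqnInv (Function.update rt a (upd (rt a) (oip, osn, true, hops + 1, sip, pre))) := by
  set rt' := Function.update rt a (upd (rt a) (oip, osn, true, hops + 1, sip, pre))
    with hrt'
  -- every node's table only gains entries
  have hK : ∀ x d, rt x d ≠ none → rt' x d ≠ none := by
    intro x d h
    by_cases hx : x = a
    · subst hx
      rw [hrt', Function.update_self]
      exact upd_kD _ _ _ _ _ _ hosn h
    · rwa [hrt', Function.update_of_ne hx]
  -- nsqn never decreases
  have hN : ∀ x d, nsqn (rt x) d ≤ nsqn (rt' x) d := by
    intro x d
    by_cases hx : x = a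
    · subst hx
      rw [hrt', Function.update_self]
      exact nsqn_upd_le _ _ _ _ _ _ hosn d
    · rw [hrt', Function.update_of_ne hx]
  intro ip dip hk hnh
  by_cases hip : ip = a
  · -- note: `subst hip` replaces `a` by `ip` everywhere
    subst hip
    have hup : rt' ip = upd (rt ip) (oip, osn, true, hops + 1, sip, pre) := by
      rw [hrt', Function.update_self]
    by_cases hd : dip = oip
    · -- `subst hd` replaces `oip` by `dip` everywhere
      subst hd
      rcases upd_oip (rt ip) dip sip osn hops pre hosn with ⟨_, X, hX⟩ |
        ⟨d₀, f₀, h₀, n₀, p₀, X, he, hX⟩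
      · -- new entry installed: next hop is sip
        have hnhop : nhop (rt' ip) dip = sip := by
          unfold nhop; rw [hup, hX]
        have hns : nsqn (rt' ip) dip = osn := by
          unfold nsqn; rw [hup, hX]; simp
        rw [hnhop, hns]
        exact ⟨hK sip dip hkD, le_trans hfresh (hN sip dip)⟩
      · -- entry kept (only precursors change)
        have hnhop : nhop (rt' ip) dip = n₀ := by
          unfold nhop; rw [hup, hX]
        have hnhop₀ : nhop (rt ip) dip = n₀ := by
          unfold nhop; rw [he]
        have hns : nsqn (rt' ip) dip = nsqn (rt ip) dip := by
          unfold nsqn; rw [hup, hX, he]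
        have hk₀ : dip ∈ kD (rt ip) := by rw [kD_mem, he]; simp
        have hold := hinv ip dip hk₀ (by rw [hnhop₀]; rw [hnhop] at hnh; exact hnh)
        rw [hnhop₀] at hold
        rw [hnhop, hns]
        exact ⟨hK n₀ dip hold.1, le_trans hold.2 (hN n₀ dip)⟩
    · -- other destination at node ip: entry unchanged
      have heq : rt' ip dip = rt ip dip := by
        rw [hup]; exact upd_ne (rt ip) _ hd
      have hnhop : nhop (rt' ip) dip = nhop (rt ip) dip := nhop_congr heq
      have hns : nsqn (rt' ip) dip = nsqn (rt ip) dip := nsqn_congr heq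
      have hk₀ : dip ∈ kD (rt ip) := by rw [kD_mem, ← heq]; exact hk
      have hold := hinv ip dip hk₀ (by rw [← hnhop]; exact hnh)
      rw [hnhop, hns]
      exact ⟨hK _ dip hold.1, le_trans hold.2 (hN _ dip)⟩
  · have heq : rt' ip = rt ip := Function.update_of_ne hip _ _
    have hk₀ : dip ∈ kD (rt ip) := by rwa [kD_mem, ← congrFun heq dip]
    have hnhop : nhop (rt' ip) dip = nhop (rt ip) dip := nhop_congr (congrFun heq dip)
    have hns : nsqn (rt' ip) dip = nsqn (rt ip) dip := nsqn_congr (congrFun heq dip)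
    have hold := hinv ip dip hk₀ (by rw [← hnhop]; exact hnh)
    rw [hnhop, hns]
    exact ⟨hK _ dip hold.1, le_trans hold.2 (hN _ dip)⟩
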